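/- For all integers n ≥ 1 and 0 ≤ k ≤ n, the cyclic (n,k)-matrix M_{n,k} is k-uniform and optimal. -/

import Mathlib

/-- `M` is a binary (0/1) matrix. -/
def IsBinary {n : ℕ} (M : Fin n → Fin n → ℕ) : Prop :=
  ∀ i j, M i j = 0 ∨ M i j = 1

/-- Every row and every column of `M` contains exactly `k` entries equal to `1`. -/
def IsUniform {n : ℕ} (k : ℕ) (M : Fin n → Fin n → ℕ) : Prop :=
  (∀ i, (Finset.univ.filter fun j => M i j = 1).card = k) ∧
  (∀ j, (Finset.univ.filter fun i => M i j = 1).card = k)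

/-- Partial row sum `S_{i,j}`: sum of the entries of row `i` in columns `≤ j`. -/
def RowSum {n : ℕ} (M : Fin n → Fin n → ℕ) (i j : Fin n) : ℕ :=
  ∑ l ∈ Finset.Iic j, M i l

/-- An assignment mapping between columns `j` and `j'`: a bijection from
`{i : M i j = 1}` onto `{i : M i j' = 1}`. -/
def IsAssignment {n : ℕ} (M : Fin n → Fin n → ℕ) (j j' : Fin n) (φ : Fin n → Fin n) : Prop :=
  Set.BijOn φ {i | M i j = 1} {i | M i j' = 1}

/-- Condition (2): `S_{φ(i),j} ≤ S_{i,j}` for all `i` in the domain. -/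
def Cond2 {n : ℕ} (M : Fin n → Fin n → ℕ) (j : Fin n) (φ : Fin n → Fin n) : Prop :=
  ∀ i, M i j = 1 → RowSum M (φ i) j ≤ RowSum M i j

/-- Condition (1): `φ(i) = i` exactly when `m_{i,j} = m_{i,j'} = 1`. -/
def Cond1 {n : ℕ} (M : Fin n → Fin n → ℕ) (j j' : Fin n) (φ : Fin n → Fin n) : Prop :=
  ∀ i, M i j = 1 → (φ i = i ↔ (M i j = 1 ∧ M i j' = 1))

/-- `M` is optimal: it is `k`-uniform for some `k`, and between each pair of consecutive
columns there is an assignment mapping satisfying Condition (2). -/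
def Optimal {n : ℕ} (M : Fin n → Fin n → ℕ) : Prop :=
  (∃ k, IsUniform k M) ∧
  ∀ j : ℕ, ∀ hj : j + 1 < n, ∃ φ : Fin n → Fin n,
    IsAssignment M ⟨j, Nat.lt_of_succ_lt hj⟩ ⟨j + 1, hj⟩ φ ∧
    Cond2 M ⟨j, Nat.lt_of_succ_lt hj⟩ φ

open scoped Classical in
/-- The cyclic `(n,k)`-matrix: the `(i,j)` entry equals `1` iff
`j ≡ ik + a (mod n)` for some `0 ≤ a ≤ k − 1`. -/
noncomputable def cyc (n k : ℕ) : Fin n → Fin n → ℕ := fun i j =>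
  if ∃ a < k, (j : ℕ) ≡ (i : ℕ) * k + a [MOD n] then 1 else 0

/-!
Row `i` of `cyc n k` is the cyclic block of `k` consecutive columns starting at `i * k mod n`,
so every row has `k` ones and the block of row `i + 1` starts right after the block of row `i`
ends. Between columns `j` and `j + 1` the assignment fixes every row whose block goes on past `j`
and sends each row whose block ends at `j` to the next row, whose block starts at `j + 1`. The
ones of that next row in columns `≤ j` are the wrapped-around part of its block; shifted left by
`k` they land inside the block of row `i`, still in columns `≤ j`, which gives Condition (2).
These bijections also show that all columns have the same number of ones, which double counting
then identifies as `k`.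
-/

open Finset

variable {n k : ℕ}

lemma IsBinary.rowSum_eq_card {M : Fin n → Fin n → ℕ} (hM : IsBinary M) (i j : Fin n) :
    RowSum M i j = #{l ∈ Iic j | M i l = 1} := by
  rw [RowSum, card_filter]
  refine sum_congr rfl fun l _ => ?_
  rcases hM i l with h | h <;> simp [h]

lemma isUniform_of_card_col_eq [NeZero n] {M : Fin n → Fin n → ℕ} {c : ℕ}
    (hrow : ∀ i, #{j | M i j = 1} = k) (hcol : ∀ j, #{i | M i j = 1} = c) :
    IsUniform k M := by
  have hsum : ∑ j : Fin n, #{i | M i j = 1} = ∑ i : Fin n, #{j | M i j = 1} := by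
    simp only [card_filter]
    exact sum_comm
  simp only [hrow, hcol, sum_const, card_univ, Fintype.card_fin, smul_eq_mul] at hsum
  exact ⟨hrow, fun j => (hcol j).trans (Nat.eq_of_mul_eq_mul_left (NeZero.pos n) hsum)⟩

lemma Fin.natCast_val_add_one [NeZero n] (i : Fin n) :
    (((i + 1 : Fin n) : ℕ) : ZMod n) = (i : ZMod n) + 1 := by
  simp [Fin.val_add, ZMod.natCast_mod]

/-- The position of column `j` in the cyclic block of row `i`, counted from its first column
`i * k mod n`. -/
def cycOffset (n k : ℕ) (i j : Fin n) : ℕ :=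
  ((j : ZMod n) - (i : ZMod n) * k).val

lemma isBinary_cyc : IsBinary (cyc n k) := fun i j => by
  unfold cyc; split_ifs <;> simp

section CyclicMatrix

variable [NeZero n]

lemma cycOffset_eq_iff {i j : Fin n} {d : ℕ} (hd : d < n) :
    cycOffset n k i j = d ↔ (j : ZMod n) = i * k + d := by
  rw [cycOffset, ← sub_eq_iff_eq_add']
  constructor
  · rintro rfl
    exact (ZMod.natCast_zmod_val _).symm
  · intro h
    rw [h, ZMod.val_natCast_of_lt hd]

lemma cycOffset_lt (i j : Fin n) : cycOffset n k i j < n :=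
  ZMod.val_lt _

lemma natCast_eq_add_cycOffset (i j : Fin n) : (j : ZMod n) = i * k + cycOffset n k i j :=
  (cycOffset_eq_iff (cycOffset_lt i j)).1 rfl

lemma cyc_eq_one_iff (i j : Fin n) : cyc n k i j = 1 ↔ cycOffset n k i j < k := by
  simp only [cyc, ite_eq_left_iff, zero_ne_one, imp_false, not_not]
  constructor
  · rintro ⟨a, ha, hmod⟩
    have h : (j : ZMod n) = i * k + a := by
      simpa using (ZMod.natCast_eq_natCast_iff _ _ _).2 hmod
    rw [cycOffset, h, add_sub_cancel_left, ZMod.val_natCast]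
    exact (Nat.mod_le a n).trans_lt ha
  · intro h
    refine ⟨cycOffset n k i j, h, (ZMod.natCast_eq_natCast_iff _ _ _).1 ?_⟩
    push_cast
    exact natCast_eq_add_cycOffset i j

lemma cycOffset_eq_sub_of_le {i j l : Fin n} (hl : l ≤ j)
    (hd : (j : ℕ) - l ≤ cycOffset n k i j) :
    cycOffset n k i l = cycOffset n k i j - ((j : ℕ) - l) := by
  rw [cycOffset_eq_iff ((Nat.sub_le _ _).trans_lt (cycOffset_lt i j))]
  have hj := natCast_eq_add_cycOffset (k := k) i j
  rw [Nat.cast_sub hd, Nat.cast_sub (Fin.le_def.1 hl)]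
  linear_combination hj

lemma cycOffset_succ_col {i j j' : Fin n} (hj : (j' : ℕ) = j + 1) :
    cycOffset n k i j' = (cycOffset n k i j + 1) % n := by
  rw [cycOffset, cycOffset, ← ZMod.val_natCast, Nat.cast_add, ZMod.natCast_zmod_val, hj]
  push_cast
  ring_nf

lemma cycOffset_succ_row_eq_iff (hk0 : 0 < k) (hk : k ≤ n) (i j : Fin n) :
    cycOffset n k (i + 1) j = n - 1 ↔ cycOffset n k i j + 1 = k := by
  rw [show cycOffset n k i j + 1 = k ↔ cycOffset n k i j = k - 1 by omega,
    cycOffset_eq_iff (by omega), cycOffset_eq_iff (by omega), Fin.natCast_val_add_one,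
    Nat.cast_sub NeZero.one_le, Nat.cast_sub hk0, ZMod.natCast_self]
  ring_nf

lemma card_filter_cyc_row (hk : k ≤ n) (i : Fin n) : #{j | cyc n k i j = 1} = k := by
  simp only [cyc_eq_one_iff]
  conv_rhs => rw [← card_range k]
  have hoffset : ∀ a < n, cycOffset n k i ⟨((i : ZMod n) * k + a).val, ZMod.val_lt _⟩ = a :=
    fun a ha => (cycOffset_eq_iff ha).2 (ZMod.natCast_zmod_val _)
  refine card_nbij' (cycOffset n k i) (fun a => ⟨((i : ZMod n) * k + a).val, ZMod.val_lt _⟩)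
    ?_ ?_ ?_ ?_
  · intro j hj
    simpa using hj
  · intro a ha
    simp only [coe_range, Set.mem_Iio] at ha
    simpa [hoffset a (ha.trans_le hk)] using ha
  · intro j _
    refine Fin.ext ?_
    dsimp only
    rw [← natCast_eq_add_cycOffset, ZMod.val_natCast_of_lt j.isLt]
  · intro a ha
    simp only [coe_range, Set.mem_Iio] at ha
    exact hoffset a (ha.trans_le hk)

def cycAssignment (n k : ℕ) [NeZero n] (j i : Fin n) : Fin n :=
  if cycOffset n k i j + 1 = k then i + 1 else i

lemma bijOn_cycAssignment (hk : k ≤ n) {j j' : Fin n} (hj : (j' : ℕ) = j + 1) :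
    Set.BijOn (cycAssignment n k j) {i | cyc n k i j = 1} {i | cyc n k i j' = 1} := by
  simp only [cyc_eq_one_iff]
  refine ⟨fun i hi => ?_, fun i hi i' hi' he => ?_, fun i' hi' => ?_⟩
  · simp only [Set.mem_ofPred_eq] at hi ⊢
    unfold cycAssignment
    split_ifs with h
    · have := (cycOffset_succ_row_eq_iff (by omega) hk i j).2 h
      rw [cycOffset_succ_col hj, this, Nat.sub_add_cancel NeZero.one_le, Nat.mod_self]
      omega
    · rw [cycOffset_succ_col hj, Nat.mod_eq_of_lt (by omega)]
      omega
  · simp only [Set.mem_ofPred_eq, cycAssignment] at hi hi' he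
    split_ifs at he with h h' h'
    · exact add_right_cancel he
    · have := (cycOffset_succ_row_eq_iff (by omega) hk i j).2 h
      rw [he] at this
      omega
    · have := (cycOffset_succ_row_eq_iff (by omega) hk i' j).2 h'
      rw [← he] at this
      omega
    · exact he
  · simp only [Set.mem_ofPred_eq] at hi'
    rw [cycOffset_succ_col hj] at hi'
    have hk0 : 0 < k := by omega
    by_cases h : cycOffset n k (i' - 1) j + 1 = k
    · exact ⟨i' - 1, by simp only [Set.mem_ofPred_eq]; omega, by simp [cycAssignment, h]⟩
    · have hne : cycOffset n k i' j ≠ n - 1 := fun h' =>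
        h ((cycOffset_succ_row_eq_iff hk0 hk _ j).1 (by rwa [sub_add_cancel]))
      have hlt := cycOffset_lt (k := k) i' j
      rw [Nat.mod_eq_of_lt (by omega)] at hi'
      exact ⟨i', by simp only [Set.mem_ofPred_eq]; omega, by
        simp only [cycAssignment, if_neg (show cycOffset n k i' j + 1 ≠ k by omega)]⟩

lemma card_filter_cyc_col_eq_col_zero (hk : k ≤ n) (j : Fin n) :
    #{i | cyc n k i j = 1} = #{i | cyc n k i ⟨0, NeZero.pos n⟩ = 1} := by
  obtain ⟨j, hj⟩ := j
  induction j with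
  | zero => rfl
  | succ j ih =>
    rw [← ih (by omega)]
    refine (Set.BijOn.finsetCard_eq (cycAssignment n k ⟨j, by omega⟩) ?_).symm
    simpa only [coe_filter_univ] using bijOn_cycAssignment hk (j := ⟨j, by omega⟩) rfl

lemma isUniform_cyc (hk : k ≤ n) : IsUniform k (cyc n k) :=
  isUniform_of_card_col_eq (card_filter_cyc_row hk) (card_filter_cyc_col_eq_col_zero hk)

lemma rowSum_cyc_add_one_le (hk : k ≤ n) {i j : Fin n} (h : cycOffset n k i j + 1 = k) :
    RowSum (cyc n k) (i + 1) j ≤ RowSum (cyc n k) i j := by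
  have hj := (cycOffset_succ_row_eq_iff (by omega) hk i j).2 h
  have hjn := j.isLt
  let c : Fin n := ⟨n - k, by omega⟩
  have hc : (c : ℕ) = n - k := rfl
  rw [isBinary_cyc.rowSum_eq_card, isBinary_cyc.rowSum_eq_card]
  refine card_le_card_of_injOn (· + c) (fun l hl => ?_) (add_left_injective c).injOn
  simp only [coe_filter, mem_Iic, cyc_eq_one_iff, Set.mem_ofPred_eq, Fin.le_def] at hl ⊢
  obtain ⟨hlj, hl⟩ := hl
  rw [cycOffset_eq_sub_of_le (i := i + 1) hlj (by omega)] at hl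
  have hlc : ((l + c : Fin n) : ℕ) = l + (n - k) := by
    rw [Fin.val_add, hc, Nat.mod_eq_of_lt (by omega)]
  rw [cycOffset_eq_sub_of_le (i := i) (j := j) (l := l + c) (Fin.le_def.2 (by omega)) (by omega),
    hlc]
  omega

lemma cond2_cycAssignment (hk : k ≤ n) (j : Fin n) :
    Cond2 (cyc n k) j (cycAssignment n k j) := by
  intro i _
  unfold cycAssignment
  split_ifs with h
  · exact rowSum_cyc_add_one_le hk h
  · exact le_rfl

lemma optimal_cyc (hk : k ≤ n) : Optimal (cyc n k) :=
  ⟨⟨k, isUniform_cyc hk⟩, fun _ _ =>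
    ⟨cycAssignment n k _, bijOn_cycAssignment hk rfl, cond2_cycAssignment hk _⟩⟩

end CyclicMatrix

/-- for all `n ≥ 1` and `0 ≤ k ≤ n`, the cyclic `(n,k)`-matrix is
`k`-uniform and optimal. -/
theorem stmt_13 (n k : ℕ) (hn : 1 ≤ n) (hk : k ≤ n) :
    IsUniform k (cyc n k) ∧ Optimal (cyc n k) := by
  have : NeZero n := ⟨by omega⟩
  exact ⟨isUniform_cyc hk, optimal_cyc hk⟩
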